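/- arXiv:2604.01174 — 9 statements merged into one kernel-verified Lean document; each statement's English description precedes it below -/
import Mathlib

section
/- For a, b > 0 and 0 ≤ d ≤ min(a,b), the function g(t) = (a·sin t + b·cos t − d)/(sin t · cos t) is convex on the open interval (0, π/2). -/
open Set Real

lemma trig_pos {t : ℝ} (ht : t ∈ Ioo 0 (π / 2)) :
    0 < Real.sin t ∧ 0 < Real.cos t :=
  ⟨Real.sin_pos_of_pos_of_lt_pi ht.1 (lt_trans ht.2 (by linarith [Real.pi_pos])),
   Real.cos_pos_of_mem_Ioo ⟨by linarith [ht.1, Real.pi_pos], ht.2⟩⟩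

lemma convex_aux1 (a d : ℝ) (hd0 : 0 ≤ d) (hd : d ≤ a) :
    ConvexOn ℝ (Ioo 0 (π / 2)) (fun t => (a - d * Real.sin t) / Real.cos t) := by
  have hO : IsOpen (Ioo (0:ℝ) (π / 2)) := isOpen_Ioo
  have hint : interior (Ioo (0:ℝ) (π / 2)) = Ioo 0 (π / 2) := hO.interior_eq
  set f : ℝ → ℝ := fun t => (a - d * Real.sin t) / Real.cos t with hf
  set f1 : ℝ → ℝ := fun t => (a * Real.sin t - d) / Real.cos t ^ 2 with hf1
  have hdf : ∀ t ∈ Ioo (0:ℝ) (π / 2), HasDerivAt f (f1 t) t := by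
    intro t ht
    have hc : 0 < Real.cos t := (trig_pos ht).2
    have h := ((hasDerivAt_const t a).sub
      ((hasDerivAt_const t d).mul (Real.hasDerivAt_sin t))).div (Real.hasDerivAt_cos t) hc.ne'
    replace h : HasDerivAt f _ t := h
    convert h using 1
    simp only [hf1, Pi.sub_apply, Pi.mul_apply, Pi.pow_apply, Nat.cast_ofNat]
    have hsc := Real.sin_sq_add_cos_sq t
    field_simp [hf1]
    nlinarith [hsc]
  have hderiv : EqOn (deriv f) f1 (Ioo 0 (π / 2)) := fun t ht => (hdf t ht).deriv
  have hdf1 : ∀ t ∈ Ioo (0:ℝ) (π / 2),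
      HasDerivAt f1 ((a + a * Real.sin t ^ 2 - 2 * d * Real.sin t) / Real.cos t ^ 3) t := by
    intro t ht
    have hc : 0 < Real.cos t := (trig_pos ht).2
    have hc2 : Real.cos t ^ 2 ≠ 0 := by positivity
    have h := (((Real.hasDerivAt_sin t).const_mul a).sub_const d).div
      ((Real.hasDerivAt_cos t).pow 2) hc2
    replace h : HasDerivAt f1 _ t := h
    convert h using 1
    simp only [hf1, Pi.sub_apply, Pi.mul_apply, Pi.pow_apply, Nat.cast_ofNat]
    have hsc := Real.sin_sq_add_cos_sq t
    field_simp
    linear_combination (-(a * Real.cos t)) * hsc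
  have hdf' : ∀ t ∈ Ioo (0:ℝ) (π / 2),
      HasDerivAt (deriv f) ((a + a * Real.sin t ^ 2 - 2 * d * Real.sin t) / Real.cos t ^ 3) t := by
    intro t ht
    exact (hdf1 t ht).congr_of_eventuallyEq
      ((hO.eventually_mem ht).mono fun s hs => hderiv hs)
  apply convexOn_of_deriv2_nonneg (convex_Ioo _ _)
  · exact fun t ht => (hdf t ht).continuousAt.continuousWithinAt
  · rw [hint]
    exact fun t ht => ((hdf t ht).differentiableAt).differentiableWithinAt
  · rw [hint]
    exact fun t ht => ((hdf' t ht).differentiableAt).differentiableWithinAt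
  · rw [hint]
    intro t ht
    have h2 : deriv (deriv f) t = (a + a * Real.sin t ^ 2 - 2 * d * Real.sin t) / Real.cos t ^ 3 :=
      (hdf' t ht).deriv
    simp only [Function.iterate_succ, Function.iterate_zero, Function.comp_apply, id_eq]
    rw [h2]
    have hc : 0 < Real.cos t := (trig_pos ht).2
    have hs0 : 0 ≤ Real.sin t := (trig_pos ht).1.le
    have hs1 : Real.sin t ≤ 1 := Real.sin_le_one t
    apply div_nonneg _ (by positivity)
    nlinarith [sq_nonneg (1 - Real.sin t)]

lemma convex_aux2 (b d : ℝ) (hd0 : 0 ≤ d) (hd : d ≤ b) :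
    ConvexOn ℝ (Ioo 0 (π / 2)) (fun t => (b - d * Real.cos t) / Real.sin t) := by
  have hO : IsOpen (Ioo (0:ℝ) (π / 2)) := isOpen_Ioo
  have hint : interior (Ioo (0:ℝ) (π / 2)) = Ioo 0 (π / 2) := hO.interior_eq
  set f : ℝ → ℝ := fun t => (b - d * Real.cos t) / Real.sin t with hf
  set f1 : ℝ → ℝ := fun t => (d - b * Real.cos t) / Real.sin t ^ 2 with hf1
  have hdf : ∀ t ∈ Ioo (0:ℝ) (π / 2), HasDerivAt f (f1 t) t := by
    intro t ht
    have hs : 0 < Real.sin t := (trig_pos ht).1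
    have h := ((hasDerivAt_const t b).sub
      ((hasDerivAt_const t d).mul (Real.hasDerivAt_cos t))).div (Real.hasDerivAt_sin t) hs.ne'
    replace h : HasDerivAt f _ t := h
    convert h using 1
    simp only [hf1, Pi.sub_apply, Pi.mul_apply, Pi.pow_apply, Nat.cast_ofNat]
    have hsc := Real.sin_sq_add_cos_sq t
    field_simp [hf1]
    nlinarith [hsc]
  have hderiv : EqOn (deriv f) f1 (Ioo 0 (π / 2)) := fun t ht => (hdf t ht).deriv
  have hdf1 : ∀ t ∈ Ioo (0:ℝ) (π / 2),
      HasDerivAt f1 ((b + b * Real.cos t ^ 2 - 2 * d * Real.cos t) / Real.sin t ^ 3) t := by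
    intro t ht
    have hs : 0 < Real.sin t := (trig_pos ht).1
    have hs2 : Real.sin t ^ 2 ≠ 0 := by positivity
    have h := ((hasDerivAt_const t d).sub ((Real.hasDerivAt_cos t).const_mul b)).div
      ((Real.hasDerivAt_sin t).pow 2) hs2
    replace h : HasDerivAt f1 _ t := h
    convert h using 1
    simp only [hf1, Pi.sub_apply, Pi.mul_apply, Pi.pow_apply, Nat.cast_ofNat]
    have hsc := Real.sin_sq_add_cos_sq t
    field_simp
    linear_combination (-(b * Real.sin t)) * hsc
  have hdf' : ∀ t ∈ Ioo (0:ℝ) (π / 2),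
      HasDerivAt (deriv f) ((b + b * Real.cos t ^ 2 - 2 * d * Real.cos t) / Real.sin t ^ 3) t := by
    intro t ht
    exact (hdf1 t ht).congr_of_eventuallyEq
      ((hO.eventually_mem ht).mono fun s hs => hderiv hs)
  apply convexOn_of_deriv2_nonneg (convex_Ioo _ _)
  · exact fun t ht => (hdf t ht).continuousAt.continuousWithinAt
  · rw [hint]
    exact fun t ht => ((hdf t ht).differentiableAt).differentiableWithinAt
  · rw [hint]
    exact fun t ht => ((hdf' t ht).differentiableAt).differentiableWithinAt
  · rw [hint]
    intro t ht
    have h2 : deriv (deriv f) t = (b + b * Real.cos t ^ 2 - 2 * d * Real.cos t) / Real.sin t ^ 3 :=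
      (hdf' t ht).deriv
    simp only [Function.iterate_succ, Function.iterate_zero, Function.comp_apply, id_eq]
    rw [h2]
    have hs : 0 < Real.sin t := (trig_pos ht).1
    have hc0 : 0 ≤ Real.cos t := (trig_pos ht).2.le
    have hc1 : Real.cos t ≤ 1 := Real.cos_le_one t
    apply div_nonneg _ (by positivity)
    nlinarith [sq_nonneg (1 - Real.cos t)]

theorem stmt3 (a b d : ℝ) (ha : 0 < a) (hb : 0 < b) (hd0 : 0 ≤ d) (hd : d ≤ min a b) :
    ConvexOn ℝ (Ioo 0 (π / 2))
      (fun t : ℝ => (a * Real.sin t + b * Real.cos t - d) / (Real.sin t * Real.cos t)) := by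
  have h1 := convex_aux1 a d hd0 (hd.trans (min_le_left a b))
  have h2 := convex_aux2 b d hd0 (hd.trans (min_le_right a b))
  refine (h1.add h2).congr fun t ht => ?_
  have hs : 0 < Real.sin t := (trig_pos ht).1
  have hc : 0 < Real.cos t := (trig_pos ht).2
  have hsc := Real.sin_sq_add_cos_sq t
  simp only [Pi.add_apply]
  field_simp
  linear_combination (-d) * hsc
end

section
/- For a, b > 0 and 0 < d ≤ min(a,b), the infimum n(a,b,d) of g(t) = (a·sin t + b·cos t − d)/(sin t·cos t) over (0, π/2) satisfies n(a,b,d) ≤ ab/d, with equality if and only if d = ab/√(a²+b²). -/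
open Set Real

set_option maxHeartbeats 1000000 in
theorem stmt7 (a b d : ℝ) (ha : 0 < a) (hb : 0 < b) (hd0 : 0 < d) (hd : d ≤ min a b) :
    sInf ((fun t : ℝ => (a * Real.sin t + b * Real.cos t - d) / (Real.sin t * Real.cos t)) ''
        Ioo 0 (π / 2)) ≤ a * b / d ∧
    (sInf ((fun t : ℝ => (a * Real.sin t + b * Real.cos t - d) / (Real.sin t * Real.cos t)) ''
        Ioo 0 (π / 2)) = a * b / d ↔ d = a * b / Real.sqrt (a ^ 2 + b ^ 2)) := by
  have hda : d ≤ a := hd.trans (min_le_left a b)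
  have hdb : d ≤ b := hd.trans (min_le_right a b)
  set r := Real.sqrt (a ^ 2 + b ^ 2) with hrdef
  have hS : (0:ℝ) < a ^ 2 + b ^ 2 := by positivity
  have hr : 0 < r := Real.sqrt_pos.mpr hS
  have hr2 : r ^ 2 = a ^ 2 + b ^ 2 := Real.sq_sqrt hS.le
  clear_value r
  have hbr : b < r := by nlinarith
  have hq0 : 0 < b / r := by positivity
  have hq1 : b / r < 1 := (div_lt_one hr).mpr hbr
  set t0 := Real.arcsin (b / r) with ht0
  have ht0mem : t0 ∈ Ioo 0 (π / 2) :=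
    ⟨Real.arcsin_pos.mpr hq0, (Real.arcsin_lt_pi_div_two).mpr hq1⟩
  have hsin : Real.sin t0 = b / r := Real.sin_arcsin (by linarith) hq1.le
  have hcos : Real.cos t0 = a / r := by
    rw [ht0, Real.cos_arcsin]
    rw [show 1 - (b / r) ^ 2 = (a / r) ^ 2 by field_simp; nlinarith]
    exact Real.sqrt_sq (by positivity)
  clear_value t0
  -- positivity of sin and cos on the interval
  have hsc : ∀ t ∈ Ioo (0:ℝ) (π / 2), 0 < Real.sin t ∧ 0 < Real.cos t := by
    intro t ht
    obtain ⟨ht1, ht2⟩ := ht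
    refine ⟨Real.sin_pos_of_pos_of_lt_pi ht1 (by linarith [Real.pi_pos]), ?_⟩
    exact Real.cos_pos_of_mem_Ioo ⟨by linarith [Real.pi_pos], ht2⟩
  have hbdd : BddBelow ((fun t : ℝ => (a * Real.sin t + b * Real.cos t - d) /
      (Real.sin t * Real.cos t)) '' Ioo 0 (π / 2)) := by
    refine ⟨0, ?_⟩
    rintro x ⟨t, ht, rfl⟩
    obtain ⟨hs, hc⟩ := hsc t ht
    have hpy := Real.sin_sq_add_cos_sq t
    have h1 : (1:ℝ) ≤ Real.sin t + Real.cos t := by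
      nlinarith [mul_pos hs hc]
    have hnum : 0 ≤ a * Real.sin t + b * Real.cos t - d := by nlinarith
    exact div_nonneg hnum (mul_pos hs hc).le
  have hmem : (a * Real.sin t0 + b * Real.cos t0 - d) / (Real.sin t0 * Real.cos t0) ∈
      ((fun t : ℝ => (a * Real.sin t + b * Real.cos t - d) /
        (Real.sin t * Real.cos t)) '' Ioo 0 (π / 2)) := ⟨t0, ht0mem, rfl⟩
  have hle0 : sInf ((fun t : ℝ => (a * Real.sin t + b * Real.cos t - d) /
      (Real.sin t * Real.cos t)) '' Ioo 0 (π / 2)) ≤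
      (a * Real.sin t0 + b * Real.cos t0 - d) / (Real.sin t0 * Real.cos t0) :=
    csInf_le hbdd hmem
  have hval : (a * Real.sin t0 + b * Real.cos t0 - d) / (Real.sin t0 * Real.cos t0) ≤
      a * b / d := by
    rw [hsin, hcos, div_le_div_iff₀ (by positivity) hd0]
    have key : 0 ≤ (a * b - d * r) ^ 2 := sq_nonneg _
    have hrne : r ≠ 0 := hr.ne'
    field_simp
    nlinarith [sq_nonneg (a * b - d * r), hr.le, mul_pos ha hb]
  constructor
  · exact hle0.trans hval
  constructor
  · -- sInf = ab/d → d = ab/r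
    intro h
    by_contra hne
    have habdr : a * b - d * r ≠ 0 := by
      intro hz
      apply hne
      field_simp
      linarith
    have hvallt : (a * Real.sin t0 + b * Real.cos t0 - d) / (Real.sin t0 * Real.cos t0) <
        a * b / d := by
      rw [hsin, hcos, div_lt_div_iff₀ (by positivity) hd0]
      have key : 0 < (a * b - d * r) ^ 2 :=
        lt_of_le_of_ne (sq_nonneg _) (Ne.symm (pow_ne_zero 2 habdr))
      have hrne : r ≠ 0 := hr.ne'
      rw [show a * (b / r) + b * (a / r) - d = (2 * (a * b) - d * r) / r by field_simp; ring,
        show b / r * (a / r) = b * a / r ^ 2 by rw [div_mul_div_comm]; ring_nf,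
        show a * b * (b * a / r ^ 2) = a * b * (b * a) / r ^ 2 by ring,
        div_mul_eq_mul_div, div_lt_div_iff₀ hr (by positivity)]
      nlinarith [mul_pos key hr]
    have := hle0.trans_lt hvallt
    rw [h] at this
    exact lt_irrefl _ this
  · -- d = ab/r → sInf = ab/d
    intro hdeq
    have hrd : r * d = a * b := by rw [hdeq]; field_simp
    have habd : a * b / d = r := by
      rw [hdeq]; field_simp
    rw [habd]
    refine le_antisymm (by rw [← habd]; exact hle0.trans hval) ?_
    refine le_csInf ⟨_, hmem⟩ ?_
    rintro x ⟨t, ht, rfl⟩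
    obtain ⟨hs, hc⟩ := hsc t ht
    have hpy : Real.sin t ^ 2 + Real.cos t ^ 2 = 1 := Real.sin_sq_add_cos_sq t
    set s := Real.sin t with hsdef
    set co := Real.cos t with hcodef
    clear_value s co
    have hfac : (a - r * co) * (r * s - b) * ((a + r * co) * (r * s + b)) =
        (r ^ 2 * s ^ 2 - b ^ 2) ^ 2 := by
      linear_combination (b ^ 2 - r ^ 2 * s ^ 2) * hr2 + r ^ 2 * (b ^ 2 - r ^ 2 * s ^ 2) * hpy
    have hP : 0 < (a + r * co) * (r * s + b) := by positivity
    have key : 0 ≤ (a - r * co) * (r * s - b) := by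
      have h2 : (a - r * co) * (r * s - b) =
          (r ^ 2 * s ^ 2 - b ^ 2) ^ 2 / ((a + r * co) * (r * s + b)) := by
        rw [eq_div_iff hP.ne']
        linear_combination hfac
      rw [h2]
      positivity
    show r ≤ (a * Real.sin t + b * Real.cos t - d) / (Real.sin t * Real.cos t)
    rw [← hsdef, ← hcodef, le_div_iff₀ (mul_pos hs hc)]
    have h3 : 0 ≤ r * (a * s + b * co - d - r * (s * co)) := by
      have expand : r * (a * s + b * co - d - r * (s * co)) = (a - r * co) * (r * s - b) := by
        linear_combination (-1 : ℝ) * hrd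
      rw [expand]; exact key
    clear hbdd hmem hle0 hval hsc hdeq habd hfac hP key hpy ht
    have h4 : 0 ≤ a * s + b * co - d - r * (s * co) := by
      by_contra hcon
      push_neg at hcon
      nlinarith [mul_pos hr (neg_pos.mpr hcon)]
    linarith
end

section
/- For a, b > 0, setting l = √(a²+b²) and h = ab/l, the minimum over t ∈ [0, π/2] of f(t) = a·sin t + b·cos t − l·sin t·cos t equals h. -/
open Set Real

theorem stmt8 (a b : ℝ) (ha : 0 < a) (hb : 0 < b) :
    IsLeast ((fun t : ℝ => a * Real.sin t + b * Real.cos t -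
        Real.sqrt (a ^ 2 + b ^ 2) * Real.sin t * Real.cos t) '' Icc 0 (π / 2))
      (a * b / Real.sqrt (a ^ 2 + b ^ 2)) := by
  set l := Real.sqrt (a ^ 2 + b ^ 2) with hl
  have hl0 : 0 < l := Real.sqrt_pos.2 (by positivity)
  have hl2 : l ^ 2 = a ^ 2 + b ^ 2 := Real.sq_sqrt (by positivity)
  have hbl : b / l ≤ 1 := by
    rw [div_le_one hl0]
    nlinarith
  have hbl0 : 0 ≤ b / l := by positivity
  constructor
  · refine ⟨Real.arcsin (b / l), ⟨Real.arcsin_nonneg.2 hbl0,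
      Real.arcsin_le_pi_div_two _⟩, ?_⟩
    have hs : Real.sin (Real.arcsin (b / l)) = b / l :=
      Real.sin_arcsin (by linarith) hbl
    have hc : Real.cos (Real.arcsin (b / l)) = a / l := by
      rw [Real.cos_arcsin]
      have h1 : 1 - (b / l) ^ 2 = (a / l) ^ 2 := by
        field_simp
        nlinarith
      rw [h1, Real.sqrt_sq (by positivity)]
    simp only [hs, hc]
    field_simp
    norm_num
  · rintro x ⟨t, ht, rfl⟩
    have h1 : Real.sin t ^ 2 + Real.cos t ^ 2 = 1 := Real.sin_sq_add_cos_sq t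
    have hs0 : 0 ≤ Real.sin t :=
      Real.sin_nonneg_of_nonneg_of_le_pi ht.1 (le_trans ht.2 (by linarith [Real.pi_pos]))
    have hc0 : 0 ≤ Real.cos t := Real.cos_nonneg_of_mem_Icc
      ⟨le_trans (by linarith [Real.pi_pos]) ht.1, ht.2⟩
    set s := Real.sin t
    set c := Real.cos t
    have key : (a - l * c) * (b - l * s) ≤ 0 := by
      by_contra h
      push_neg at h
      rcases mul_pos_iff.1 h with ⟨h1', h2'⟩ | ⟨h1', h2'⟩
      · have p1 : 0 < (a - l * c) * (a + l * c) :=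
          mul_pos h1' (by positivity)
        have p2 : 0 < (b - l * s) * (b + l * s) :=
          mul_pos h2' (by positivity)
        nlinarith
      · have p1 : 0 < (l * c - a) * (l * c + a) :=
          mul_pos (by linarith) (by positivity)
        have p2 : 0 < (l * s - b) * (l * s + b) :=
          mul_pos (by linarith) (by positivity)
        nlinarith
    simp only
    rw [div_le_iff₀ hl0]
    nlinarith
end

section
/- For a, b > 0 and c ≥ (a^{2/3} + b^{2/3})^{3/2}, the minimum over t ∈ [0, π/2] of f(t) = a·sin t + b·cos t − c·sin t·cos t is at most 0. -/
open Set Real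

theorem stmt9 (a b c : ℝ) (ha : 0 < a) (hb : 0 < b)
    (hc : (a ^ ((2 : ℝ) / 3) + b ^ ((2 : ℝ) / 3)) ^ ((3 : ℝ) / 2) ≤ c) :
    ∀ m : ℝ,
      IsLeast ((fun t : ℝ => a * Real.sin t + b * Real.cos t - c * Real.sin t * Real.cos t) ''
        Icc 0 (π / 2)) m → m ≤ 0 := by
  intro m hm
  set p := a ^ ((1:ℝ)/3) with hp
  set q := b ^ ((1:ℝ)/3) with hq
  have hp0 : 0 < p := Real.rpow_pos_of_pos ha _
  have hq0 : 0 < q := Real.rpow_pos_of_pos hb _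
  have hpa : p ^ 3 = a := by
    rw [hp, ← Real.rpow_natCast (a ^ ((1:ℝ)/3)) 3, ← Real.rpow_mul ha.le]
    norm_num
  have hqb : q ^ 3 = b := by
    rw [hq, ← Real.rpow_natCast (b ^ ((1:ℝ)/3)) 3, ← Real.rpow_mul hb.le]
    norm_num
  have hpA : p ^ 2 = a ^ ((2:ℝ)/3) := by
    rw [hp, ← Real.rpow_natCast (a ^ ((1:ℝ)/3)) 2, ← Real.rpow_mul ha.le]
    norm_num
  have hqB : q ^ 2 = b ^ ((2:ℝ)/3) := by
    rw [hq, ← Real.rpow_natCast (b ^ ((1:ℝ)/3)) 2, ← Real.rpow_mul hb.le]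
    norm_num
  set s := Real.sqrt (p ^ 2 + q ^ 2) with hs
  have hsum : 0 < p ^ 2 + q ^ 2 := by positivity
  have hs0 : 0 < s := Real.sqrt_pos.mpr hsum
  have hs2 : s ^ 2 = p ^ 2 + q ^ 2 := Real.sq_sqrt hsum.le
  have hcs : s ^ 3 ≤ c := by
    have : s ^ 3 = (p ^ 2 + q ^ 2) ^ ((3:ℝ)/2) := by
      rw [hs, Real.sqrt_eq_rpow, ← Real.rpow_natCast _ 3, ← Real.rpow_mul hsum.le]
      norm_num
    rw [this, hpA, hqB]
    exact hc
  have hqs : q ≤ s := by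
    rw [hs]
    nlinarith [Real.sq_sqrt hsum.le, Real.sqrt_nonneg (p ^ 2 + q ^ 2)]
  have hx0 : (0:ℝ) ≤ q / s := by positivity
  have hx1 : q / s ≤ 1 := (div_le_one hs0).mpr hqs
  set t := Real.arcsin (q / s) with ht
  have hsin : Real.sin t = q / s := Real.sin_arcsin (by linarith) hx1
  have hcos : Real.cos t = p / s := by
    rw [ht, Real.cos_arcsin]
    rw [show 1 - (q / s) ^ 2 = (p / s) ^ 2 by field_simp; nlinarith]
    exact Real.sqrt_sq (by positivity)
  have htmem : t ∈ Icc 0 (π / 2) :=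
    ⟨Real.arcsin_nonneg.mpr hx0, Real.arcsin_le_pi_div_two _⟩
  have hval : a * Real.sin t + b * Real.cos t - c * Real.sin t * Real.cos t ≤ 0 := by
    rw [hsin, hcos, ← hpa, ← hqb]
    have h1 : p ^ 3 * (q / s) + q ^ 3 * (p / s) = s * (p * q) := by
      field_simp
      linear_combination -hs2
    have h2 : s * (p * q) ≤ c * (q / s) * (p / s) := by
      rw [show c * (q / s) * (p / s) = c * (q * p) / s ^ 2 by ring]
      rw [le_div_iff₀ (by positivity)]
      nlinarith [mul_le_mul_of_nonneg_right hcs (mul_pos hq0 hp0).le]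
    linarith
  exact le_trans (hm.2 ⟨t, htmem, rfl⟩) hval
end

section
/- For a, b, c > 0 with d := min over [0,π/2] of (a·sin t + b·cos t − c·sin t·cos t) satisfying d ≥ 0, one has c·d ≤ a·b, with equality only if c = √(a²+b²) and d = ab/√(a²+b²). -/
/-! Put `s = √(a² + b²)` and take `t₀ ∈ [0, π/2]` with `sin t₀ = b / s`, `cos t₀ = a / s`.
Evaluating at `t₀` gives `c · d ≤ c · f(t₀) = a b − a b (s − c)² / s²`, so `c d ≤ a b`, and equality
forces `c = s`, after which `d = a b / c = a b / s`. -/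

open Set Real

lemma exists_mem_Icc_sin_cos_eq_div_sqrt {a b : ℝ} (ha : 0 < a) (hb : 0 ≤ b) :
    ∃ t ∈ Icc 0 (π / 2),
      sin t = b / √(a ^ 2 + b ^ 2) ∧ cos t = a / √(a ^ 2 + b ^ 2) := by
  set s := √(a ^ 2 + b ^ 2)
  have hs : 0 < s := sqrt_pos.mpr (by positivity)
  have hs2 : s ^ 2 = a ^ 2 + b ^ 2 := sq_sqrt (by positivity)
  have hbs : b / s ≤ 1 := by
    rw [div_le_one hs]
    nlinarith
  refine ⟨arcsin (b / s), ⟨arcsin_nonneg.mpr (by positivity), arcsin_le_pi_div_two _⟩,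
    sin_arcsin (by linarith [div_nonneg hb hs.le]) hbs, ?_⟩
  rw [cos_arcsin, show 1 - (b / s) ^ 2 = (a / s) ^ 2 by field_simp; linarith]
  exact sqrt_sq (by positivity)

lemma mul_le_sub_of_mem_lowerBounds {a b c d : ℝ} (ha : 0 < a) (hb : 0 ≤ b) (hc : 0 ≤ c)
    (hd : d ∈ lowerBounds ((fun t => a * sin t + b * cos t - c * sin t * cos t) '' Icc 0 (π / 2))) :
    c * d ≤ a * b - a * b * (√(a ^ 2 + b ^ 2) - c) ^ 2 / (a ^ 2 + b ^ 2) := by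
  obtain ⟨t, ht, hsin, hcos⟩ := exists_mem_Icc_sin_cos_eq_div_sqrt ha hb
  set s := √(a ^ 2 + b ^ 2)
  have hs : 0 < s := sqrt_pos.mpr (by positivity)
  have hs2 : a ^ 2 + b ^ 2 = s ^ 2 := (sq_sqrt (by positivity)).symm
  have hdt : d ≤ a * (b / s) + b * (a / s) - c * (b / s) * (a / s) := by
    simpa only [hsin, hcos] using hd ⟨t, ht, rfl⟩
  calc c * d ≤ c * (a * (b / s) + b * (a / s) - c * (b / s) * (a / s)) :=
        mul_le_mul_of_nonneg_left hdt hc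
    _ = a * b - a * b * (s - c) ^ 2 / (a ^ 2 + b ^ 2) := by
        rw [hs2]
        field_simp
        ring

theorem stmt10_general (a b c d : ℝ) (ha : 0 < a) (hb : 0 < b) (hc : 0 < c)
    (hd : IsLeast ((fun t : ℝ => a * Real.sin t + b * Real.cos t - c * Real.sin t * Real.cos t) ''
      Icc 0 (π / 2)) d) :
    c * d ≤ a * b ∧
    (c * d = a * b → c = Real.sqrt (a ^ 2 + b ^ 2) ∧ d = a * b / Real.sqrt (a ^ 2 + b ^ 2)) := by
  have hbound := mul_le_sub_of_mem_lowerBounds ha hb.le hc.le hd.2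
  have hdefect : 0 ≤ a * b * (√(a ^ 2 + b ^ 2) - c) ^ 2 / (a ^ 2 + b ^ 2) := by positivity
  refine ⟨by linarith, fun heq => ?_⟩
  have hzero : a * b * (√(a ^ 2 + b ^ 2) - c) ^ 2 / (a ^ 2 + b ^ 2) = 0 := by linarith
  have hcs : c = √(a ^ 2 + b ^ 2) := by
    have hab : a ^ 2 + b ^ 2 ≠ 0 := by positivity
    simp only [div_eq_zero_iff, mul_eq_zero, ha.ne', hb.ne', hab, pow_eq_zero_iff,
      sub_eq_zero, false_or, or_false, ne_eq, OfNat.ofNat_ne_zero, not_false_eq_true] at hzero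
    exact hzero.symm
  refine ⟨hcs, ?_⟩
  rw [← hcs, eq_div_iff hc.ne']
  linarith

theorem stmt10 (a b c d : ℝ) (ha : 0 < a) (hb : 0 < b) (hc : 0 < c)
    (hd : IsLeast ((fun t : ℝ => a * Real.sin t + b * Real.cos t - c * Real.sin t * Real.cos t) ''
      Icc 0 (π / 2)) d)
    (hd0 : 0 ≤ d) :
    c * d ≤ a * b ∧
    (c * d = a * b → c = Real.sqrt (a ^ 2 + b ^ 2) ∧ d = a * b / Real.sqrt (a ^ 2 + b ^ 2)) :=
  stmt10_general a b c d ha hb hc hd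
end

section
/- For a > 0 and c ∈ (a, 3a√2/4), the equation a + a·sin t·cos t − c·(sin t + cos t) = 0 has exactly two distinct roots in (0, π/2), with sum π/2; for c = 3a√2/4 it has the double root π/4; and otherwise (c ≤ a or c > 3a√2/4) it has no roots in (0, π/2). -/
open Set Real

lemma sumEq (t : ℝ) : Real.sin t + Real.cos t = Real.sqrt 2 * Real.cos (t - π/4) := by
  have h : Real.sqrt 2 ^ 2 = 2 := Real.sq_sqrt (by norm_num)
  rw [Real.cos_sub, Real.cos_pi_div_four, Real.sin_pi_div_four]
  linear_combination -(Real.sin t + Real.cos t)/2 * h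

lemma eqEquiv (a c t : ℝ) :
    a + a * Real.sin t * Real.cos t - c * (Real.sin t + Real.cos t) = 0 ↔
    a * (Real.sin t + Real.cos t)^2 - 2*c*(Real.sin t + Real.cos t) + a = 0 := by
  have h := Real.sin_sq_add_cos_sq t
  constructor <;> intro h'
  · linear_combination 2*h' + a*h
  · linear_combination h'/2 - a/2*h

lemma sRange {t : ℝ} (ht : t ∈ Ioo 0 (π/2)) :
    1 < Real.sin t + Real.cos t ∧ Real.sin t + Real.cos t ≤ Real.sqrt 2 := by
  obtain ⟨ht0, ht2⟩ := ht
  have hs : 0 < Real.sin t := Real.sin_pos_of_pos_of_lt_pi ht0 (by linarith [Real.pi_pos])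
  have hc : 0 < Real.cos t := Real.cos_pos_of_mem_Ioo ⟨by linarith [Real.pi_pos], ht2⟩
  have h1 := Real.sin_sq_add_cos_sq t
  constructor
  · nlinarith
  · rw [sumEq]
    have := Real.cos_le_one (t - π/4)
    nlinarith [Real.sqrt_nonneg 2]

lemma quadUniq {a c s s' : ℝ} (ha : 0 < a) (hs : 1 < s) (hs' : 1 < s')
    (h1 : a*s^2 - 2*c*s + a = 0) (h2 : a*s'^2 - 2*c*s' + a = 0) : s = s' := by
  by_contra hne
  have hf : (s - s') * (a*(s+s') - 2*c) = 0 := by linear_combination h1 - h2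
  have h3 : a*(s+s') - 2*c = 0 := by
    rcases mul_eq_zero.1 hf with h | h
    · exact absurd (by linarith : s = s') hne
    · exact h
  have h4 : a * (1 - s*s') = 0 := by linear_combination h1 - s * h3
  have h5 : s * s' = 1 := by
    rcases mul_eq_zero.1 h4 with h | h
    · linarith
    · linarith
  nlinarith

lemma tOfS {t θ : ℝ} (ht : t ∈ Ioo 0 (π/2)) (hθ1 : 0 ≤ θ) (hθ2 : θ ≤ π/4)
    (h : Real.cos (t - π/4) = Real.cos θ) : t = π/4 - θ ∨ t = π/4 + θ := by
  obtain ⟨ht0, ht2⟩ := ht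
  have hpi := Real.pi_pos
  have habs : |t - π/4| ∈ Icc 0 π := ⟨abs_nonneg _, by
    rcases abs_cases (t - π/4) with ⟨he, _⟩ | ⟨he, _⟩ <;> rw [he] <;> linarith⟩
  have hθm : θ ∈ Icc 0 π := ⟨hθ1, by linarith⟩
  have : |t - π/4| = θ := Real.injOn_cos habs hθm (by rw [Real.cos_abs, h])
  rcases abs_eq hθ1 |>.1 this with h' | h'
  · right; linarith
  · left; linarith
theorem stmt12 (a c : ℝ) (ha : 0 < a) (hc : 0 < c) :
    (a < c → c < 3 * a * Real.sqrt 2 / 4 →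
      ∃ t₁ t₂, t₁ ∈ Ioo 0 (π / 2) ∧ t₂ ∈ Ioo 0 (π / 2) ∧ t₁ ≠ t₂ ∧
        a + a * Real.sin t₁ * Real.cos t₁ - c * (Real.sin t₁ + Real.cos t₁) = 0 ∧
        a + a * Real.sin t₂ * Real.cos t₂ - c * (Real.sin t₂ + Real.cos t₂) = 0 ∧
        t₁ + t₂ = π / 2 ∧
        ∀ t ∈ Ioo 0 (π / 2),
          a + a * Real.sin t * Real.cos t - c * (Real.sin t + Real.cos t) = 0 →
            t = t₁ ∨ t = t₂) ∧
    (c = 3 * a * Real.sqrt 2 / 4 →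
      ∀ t ∈ Ioo 0 (π / 2),
        (a + a * Real.sin t * Real.cos t - c * (Real.sin t + Real.cos t) = 0 ↔ t = π / 4)) ∧
    (c ≤ a ∨ 3 * a * Real.sqrt 2 / 4 < c →
      ∀ t ∈ Ioo 0 (π / 2),
        a + a * Real.sin t * Real.cos t - c * (Real.sin t + Real.cos t) ≠ 0) := by
  have hpi := Real.pi_pos
  set r := Real.sqrt 2 with hrdef
  have hr : r ^ 2 = 2 := Real.sq_sqrt (by norm_num)
  have hr0 : 0 < r := Real.sqrt_pos.2 (by norm_num)
  have hr1 : 1 < r := by nlinarith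
  have hr2 : r < 2 := by nlinarith
  refine ⟨?_, ?_, ?_⟩
  · -- two roots case
    intro hac hc2
    set d := Real.sqrt (c^2 - a^2) with hddef
    have hd2 : d ^ 2 = c^2 - a^2 := Real.sq_sqrt (by nlinarith)
    have hd0 : 0 < d := Real.sqrt_pos.2 (by nlinarith)
    set s₀ := (c + d) / a with hs₀def
    have hs₀1 : 1 < s₀ := (one_lt_div ha).2 (by linarith)
    have hfs₀ : a * s₀^2 - 2*c*s₀ + a = 0 := by
      rw [hs₀def]; field_simp; linear_combination hd2
    have hrac : 0 < r * a - c := by nlinarith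
    have hs₀2 : s₀ < r := by
      rw [hs₀def, div_lt_iff₀ ha]
      have : d < r * a - c := by
        rw [hddef]
        exact (Real.sqrt_lt' hrac).2 (by nlinarith)
      linarith
    set θ := Real.arccos (s₀ / r) with hθdef
    have hθ0 : 0 ≤ θ := Real.arccos_nonneg _
    have hθpi : θ ≤ π := Real.arccos_le_pi _
    have hneg1 : (-1:ℝ) ≤ s₀ / r := le_trans (by norm_num) (le_of_lt (show (0:ℝ) < s₀ / r by positivity))
    have hcosθ : Real.cos θ = s₀ / r := Real.cos_arccos hneg1 ((div_le_one hr0).2 hs₀2.le)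
    have hθpos : 0 < θ := Real.arccos_pos.2 ((div_lt_one hr0).2 hs₀2)
    have hθlt : θ < π / 4 := by
      by_contra hcon
      push_neg at hcon
      have h1 : Real.cos θ ≤ Real.cos (π/4) :=
        Real.cos_le_cos_of_nonneg_of_le_pi (by linarith) hθpi hcon
      rw [Real.cos_pi_div_four, hcosθ] at h1
      rw [div_le_div_iff₀ hr0 (by norm_num : (0:ℝ) < 2)] at h1
      nlinarith
    refine ⟨π/4 - θ, π/4 + θ, ⟨by linarith, by linarith⟩, ⟨by linarith, by linarith⟩,
      by intro h; linarith [sub_eq_iff_eq_add.1 h], ?_, ?_, by ring, ?_⟩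
    · rw [eqEquiv]
      have hs : Real.sin (π/4 - θ) + Real.cos (π/4 - θ) = s₀ := by
        rw [sumEq]
        have he : π/4 - θ - π/4 = -θ := by ring
        rw [he, Real.cos_neg, hcosθ, mul_div_cancel₀ _ (ne_of_gt hr0)]
      rw [hs]; exact hfs₀
    · rw [eqEquiv]
      have hs : Real.sin (π/4 + θ) + Real.cos (π/4 + θ) = s₀ := by
        rw [sumEq]
        have he : π/4 + θ - π/4 = θ := by ring
        rw [he, hcosθ, mul_div_cancel₀ _ (ne_of_gt hr0)]
      rw [hs]; exact hfs₀
    · intro t htm hteq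
      have hF := (eqEquiv a c t).1 hteq
      obtain ⟨hs1, hs2⟩ := sRange htm
      have hseq : Real.sin t + Real.cos t = s₀ := quadUniq ha hs1 hs₀1 hF hfs₀
      have hcost : Real.cos (t - π/4) = Real.cos θ := by
        rw [hcosθ, eq_div_iff (ne_of_gt hr0)]
        linear_combination hseq - sumEq t
      exact tOfS htm hθ0 hθlt.le hcost
  · -- double root case
    intro hceq t htm
    obtain ⟨hs1, hs2⟩ := sRange htm
    constructor
    · intro hteq
      have hF := (eqEquiv a c t).1 hteq
      have hfr : a * r^2 - 2*c*r + a = 0 := by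
        rw [hceq]; linear_combination (-a/2)*hr
      have hseq : Real.sin t + Real.cos t = r := quadUniq ha hs1 hr1 hF hfr
      have hcost : Real.cos (t - π/4) = Real.cos 0 := by
        rw [Real.cos_zero]
        have h := sumEq t
        rw [hseq] at h
        nlinarith
      rcases tOfS htm le_rfl (by linarith) hcost with h | h <;> linarith
    · intro h
      subst h
      rw [Real.sin_pi_div_four, Real.cos_pi_div_four, hceq]
      linear_combination (-a/2)*hr
  · -- no roots case
    rintro (hle | hgt) t htm hteq
    · have hF := (eqEquiv a c t).1 hteq
      obtain ⟨hs1, hs2⟩ := sRange htm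
      nlinarith [mul_pos (sub_pos.2 hs1) (sub_pos.2 hs1), mul_pos hc (sub_pos.2 hs1)]
    · have hF := (eqEquiv a c t).1 hteq
      obtain ⟨hs1, hs2⟩ := sRange htm
      set s := Real.sin t + Real.cos t
      have h1 : 0 < 2*s - r := by nlinarith
      have h2 : 0 ≤ r - s := by linarith
      have h3 : 0 < s * (c - 3*a*r/4) := mul_pos (by linarith) (by linarith)
      nlinarith [mul_nonneg (mul_nonneg ha.le h1.le) h2]
end

section
/- For a, b, c > 0 with c ≥ max(a,b), and for every t ∈ (0, π/2), one has a·cos t + b·sin t − c·sin t·cos t ≥ (a·sin t + b·cos t − c)/(sin t·cos t). -/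
/-!
Multiplying by `sin t * cos t > 0` and using `sin² + cos² = 1`, the inequality becomes
`a sin³ t + b cos³ t ≤ c (1 - sin² t cos² t)`. Since `a, b ≤ c`, the left side is at most
`c (sin³ t + cos³ t) = c (sin t + cos t)(1 - sin t cos t)`, and
`sin t + cos t ≤ 1 + sin t cos t` because `(1 - sin t)(1 - cos t) ≥ 0`.
-/

open Set Real

lemma add_le_one_add_mul {s k : ℝ} (hs : s ≤ 1) (hk : k ≤ 1) : s + k ≤ 1 + s * k := by
  nlinarith [mul_nonneg (sub_nonneg.2 hs) (sub_nonneg.2 hk)]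

lemma mul_pow_three_add_mul_pow_three_le {a b c s k : ℝ} (hac : a ≤ c) (hbc : b ≤ c)
    (hc : 0 ≤ c) (hs : 0 ≤ s) (hk : 0 ≤ k) (hsk : s ^ 2 + k ^ 2 = 1) :
    a * s ^ 3 + b * k ^ 3 ≤ c * (1 - (s * k) ^ 2) := by
  have hs1 : s ≤ 1 := by nlinarith
  have hk1 : k ≤ 1 := by nlinarith
  have hmul : s * k ≤ 1 := by nlinarith [sq_nonneg (s - k)]
  calc a * s ^ 3 + b * k ^ 3 ≤ c * s ^ 3 + c * k ^ 3 := by gcongr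
    _ = c * (1 - s * k) * (s + k) := by linear_combination c * (s + k) * hsk
    _ ≤ c * (1 - s * k) * (1 + s * k) :=
        mul_le_mul_of_nonneg_left (add_le_one_add_mul hs1 hk1) (mul_nonneg hc (by linarith))
    _ = c * (1 - (s * k) ^ 2) := by ring

theorem stmt15_general (a b c : ℝ) (ha : 0 < a) (hc : max a b ≤ c) :
    ∀ t ∈ Ioo 0 (π / 2),
      (a * Real.sin t + b * Real.cos t - c) / (Real.sin t * Real.cos t) ≤
        a * Real.cos t + b * Real.sin t - c * Real.sin t * Real.cos t := by
  rintro t ⟨ht0, htπ⟩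
  have hsin : 0 < sin t := sin_pos_of_pos_of_lt_pi ht0 (by linarith [pi_pos])
  have hcos : 0 < cos t := cos_pos_of_mem_Ioo ⟨by linarith [pi_pos], htπ⟩
  have hac : a ≤ c := le_of_max_le_left hc
  have hcubes := mul_pow_three_add_mul_pow_three_le hac (le_of_max_le_right hc)
    (ha.le.trans hac) hsin.le hcos.le (sin_sq_add_cos_sq t)
  rw [div_le_iff₀ (mul_pos hsin hcos)]
  linear_combination hcubes - (a * sin t + b * cos t) * sin_sq_add_cos_sq t

theorem stmt15 (a b c : ℝ) (ha : 0 < a) (hb : 0 < b) (hc : max a b ≤ c) :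
    ∀ t ∈ Ioo 0 (π / 2),
      (a * Real.sin t + b * Real.cos t - c) / (Real.sin t * Real.cos t) ≤
        a * Real.cos t + b * Real.sin t - c * Real.sin t * Real.cos t :=
  stmt15_general a b c ha hc
end

section
/- For a, b, c > 0 with max(a,b) ≤ c and c² ≤ a² + b², the minimum of f(t) = a·sin t + b·cos t − c·sin t·cos t over [0, π/2] is at least the minimum of g(t) = (a·sin t + b·cos t − c)/(sin t·cos t) over [arccos(b/c), arcsin(a/c)]. -/
open Set Real

lemma key (a b c d s w : ℝ) (hb : 0 < b) (hd : 0 < d) (hc : 0 < c)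
    (hc2 : c^2 = b^2 + d^2) (hac : a ≤ c)
    (hs0 : 0 ≤ s) (hsd : s ≤ d) (hw : b ≤ w) (hwc : w ≤ c)
    (hsw : s^2 + w^2 = c^2) :
    c^2*(a-d) ≤ b*(a*s + (b-s)*w) := by
  have hw0 : 0 ≤ w := le_trans hb.le hw
  have hbc : b ≤ c := by nlinarith
  have hdc : d ≤ c := by nlinarith
  have h0 : 0 ≤ (c - a) * (c^2 - b*s) := by
    apply mul_nonneg (sub_nonneg.2 hac)
    nlinarith [mul_nonneg hb.le (sub_nonneg.2 hsd), sq_nonneg (b - d)]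
  rcases le_or_gt s b with hsb | hsb
  · have hX : 0 ≤ d*c - s*(c-b) := by nlinarith [mul_nonneg (sub_nonneg.2 hsd) (sub_nonneg.2 hbc)]
    have hsq : (d*c - s*(c-b))^2 ≤ (d*w)^2 := by
      nlinarith [mul_nonneg (mul_nonneg hs0 (sub_nonneg.2 hsd)) (mul_nonneg hc.le (sub_nonneg.2 hbc))]
    have hchord : 0 ≤ d*w - (d*c - s*(c-b)) := by
      nlinarith [mul_nonneg hd.le hw0]
    have h1 : 0 ≤ b * ((b - s) * (d*w - (d*c - s*(c-b)))) :=
      mul_nonneg hb.le (mul_nonneg (sub_nonneg.2 hsb) hchord)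
    have h2 : 0 ≤ b/4 * ((c - b) * (2*s - b)^2) :=
      mul_nonneg (by positivity) (mul_nonneg (sub_nonneg.2 hbc) (sq_nonneg _))
    have hV : 0 ≤ 4*c*d^2*(c-d) - b^3*(c-b) := by
      have hpos : (0:ℝ) < (c+b)*(c+d) := by positivity
      have h5 : (4*c*d^2*(c-d) - b^3*(c-b)) * ((c+b)*(c+d))
          = b^2*d^2*(4*c^2 + 3*b*c - b*d) := by
        linear_combination (4*c*d^2*(c+b) - b^3*(c+d)) * hc2
      have h6 : 0 ≤ (4*c*d^2*(c-d) - b^3*(c-b)) * ((c+b)*(c+d)) := by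
        rw [h5]
        have : (0:ℝ) ≤ 4*c^2 + 3*b*c - b*d := by nlinarith [mul_nonneg hb.le (sub_nonneg.2 hdc)]
        positivity
      exact (mul_nonneg_iff_of_pos_right hpos).mp h6
    have hident : d*(b*(a*s + (b-s)*w) - c^2*(a-d))
        = b*((b - s)*(d*w - (d*c - s*(c-b)))) + b/4*((c - b)*(2*s - b)^2)
          + (1/4)*(4*c*d^2*(c-d) - b^3*(c-b)) + d*((c - a)*(c^2 - b*s)) := by
      linear_combination (-(c*d)) * hc2
    have h3 : 0 ≤ d*((c - a)*(c^2 - b*s)) := mul_nonneg hd.le h0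
    have hdg : 0 ≤ d*(b*(a*s + (b-s)*w) - c^2*(a-d)) := by
      rw [hident]; linarith [hV, h1, h2, h3]
    have := (mul_nonneg_iff_of_pos_left hd).mp hdg
    linarith
  · have h1 : 0 ≤ b*((s - b)*(c - w)) :=
      mul_nonneg hb.le (mul_nonneg (sub_nonneg.2 hsb.le) (sub_nonneg.2 hwc))
    have hident : b*(a*s + (b-s)*w) - c^2*(a-d)
        = b*((s - b)*(c - w)) + (c - a)*(c^2 - b*s) + c*d*(c-d) := by
      linear_combination (-c) * hc2
    have h3 : 0 ≤ c*d*(c-d) := mul_nonneg (by positivity) (sub_nonneg.2 hdc)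
    linarith [hident.le, hident.ge, h0, h1, h3]


lemma keyf (a b c d st ct : ℝ) (ha : 0 < a) (hb : 0 < b) (hd : 0 < d) (hc : 0 < c)
    (hc2 : c^2 = b^2 + d^2) (hac : a ≤ c)
    (hst0 : 0 ≤ st) (hstd : st ≤ d/c) (hct : b/c ≤ ct) (hct1 : ct ≤ 1)
    (hsc : st^2 + ct^2 = 1) :
    c*(a-d)/b ≤ a*st + b*ct - c*st*ct := by
  have hs1 : c*st ≤ d := by
    have := mul_le_mul_of_nonneg_left hstd hc.le
    rwa [show c * (d/c) = d by field_simp] at this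
  have hw1 : b ≤ c*ct := by
    have := mul_le_mul_of_nonneg_left hct hc.le
    rwa [show c * (b/c) = b by field_simp] at this
  have hwc : c*ct ≤ c := by nlinarith
  have hk := key a b c d (c*st) (c*ct) hb hd hc hc2 hac (by positivity) hs1 hw1 hwc
    (by linear_combination c^2 * hsc)
  rw [div_le_iff₀ hb]
  nlinarith [hk, hc]

lemma ptwise (a b c st ct : ℝ) (hac : a ≤ c) (hbc : b ≤ c) (hc : 0 < c)
    (hs0 : 0 ≤ st) (hs1 : st ≤ 1) (hw0 : 0 ≤ ct) (hw1 : ct ≤ 1) (hpos : 0 < st*ct) :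
    (a*st + b*ct - c)/(st*ct) ≤ a*st + b*ct - c*st*ct := by
  rw [div_le_iff₀ hpos]
  have e2 : a*st + b*ct ≤ c + c*(st*ct) := by
    nlinarith [mul_nonneg (mul_nonneg hc.le (sub_nonneg.2 hs1)) (sub_nonneg.2 hw1),
      mul_le_mul_of_nonneg_right hac hs0, mul_le_mul_of_nonneg_right hbc hw0]
  have e3 : st*ct ≤ 1 := by nlinarith
  nlinarith [mul_nonneg (sub_nonneg.2 e3) (sub_nonneg.2 e2)]

set_option maxHeartbeats 1600000 in
theorem stmt16 (a b c : ℝ) (ha : 0 < a) (hb : 0 < b) (hc : 0 < c)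
    (h1 : max a b ≤ c) (h2 : c ^ 2 ≤ a ^ 2 + b ^ 2) :
    ∀ m₁ m₂ : ℝ,
      IsLeast ((fun t : ℝ => a * Real.sin t + b * Real.cos t - c * Real.sin t * Real.cos t) ''
        Icc 0 (π / 2)) m₁ →
      IsLeast ((fun t : ℝ => (a * Real.sin t + b * Real.cos t - c) /
          (Real.sin t * Real.cos t)) '' Icc (Real.arccos (b / c)) (Real.arcsin (a / c))) m₂ →
      m₂ ≤ m₁ := by
  intro m₁ m₂ h₁ h₂
  have hac1 : a ≤ c := le_trans (le_max_left a b) h1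
  have hbc1 : b ≤ c := le_trans (le_max_right a b) h1
  have hbcle : b/c ≤ 1 := by rw [div_le_one hc]; exact hbc1
  have hbc0 : (0:ℝ) ≤ b/c := by positivity
  have hacle : a/c ≤ 1 := by rw [div_le_one hc]; exact hac1
  have hac0 : (0:ℝ) ≤ a/c := by positivity
  set t1 := Real.arccos (b/c) with ht1def
  set t2 := Real.arcsin (a/c) with ht2def
  have ht10 : 0 ≤ t1 := Real.arccos_nonneg _
  have ht1p : t1 ≤ π/2 := Real.arccos_le_pi_div_two.2 hbc0
  have ht20 : 0 ≤ t2 := Real.arcsin_nonneg.2 hac0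
  have ht2p : t2 ≤ π/2 := Real.arcsin_le_pi_div_two _
  have hcost1 : Real.cos t1 = b/c := Real.cos_arccos (by linarith) hbcle
  have hsint1' : Real.sin t1 = Real.sqrt (1 - (b/c)^2) := Real.sin_arccos _
  have hsint2 : Real.sin t2 = a/c := Real.sin_arcsin (by linarith) hacle
  have hcost2' : Real.cos t2 = Real.sqrt (1 - (a/c)^2) := Real.cos_arcsin _
  have hsqb : Real.sqrt (1 - (b/c)^2) = Real.sqrt (c^2 - b^2) / c := by
    rw [show 1 - (b/c)^2 = (c^2 - b^2)/c^2 by field_simp,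
      Real.sqrt_div (by nlinarith) , Real.sqrt_sq hc.le]
  have hsqa : Real.sqrt (1 - (a/c)^2) = Real.sqrt (c^2 - a^2) / c := by
    rw [show 1 - (a/c)^2 = (c^2 - a^2)/c^2 by field_simp,
      Real.sqrt_div (by nlinarith), Real.sqrt_sq hc.le]
  have ht12 : t1 ≤ t2 := by
    by_contra hcon
    push_neg at hcon
    have := Real.strictMonoOn_sin ⟨by linarith, ht2p⟩ ⟨by linarith, ht1p⟩ hcon
    rw [hsint2, hsint1', hsqb] at this
    have hle : Real.sqrt (c^2 - b^2) ≤ a := by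
      rw [show a = Real.sqrt (a^2) by rw [Real.sqrt_sq ha.le]]
      exact Real.sqrt_le_sqrt (by nlinarith)
    have : a/c < Real.sqrt (c^2-b^2)/c := this
    rw [div_lt_div_iff_of_pos_right hc] at this
    linarith
  obtain ⟨t, ht, hft⟩ := h₁.1
  have hsin0 : 0 ≤ Real.sin t := Real.sin_nonneg_of_nonneg_of_le_pi ht.1 (by linarith [ht.2, pi_pos])
  have hcos0 : 0 ≤ Real.cos t := Real.cos_nonneg_of_mem_Icc ⟨by linarith [ht.1, pi_pos], ht.2⟩
  have hsin1 : Real.sin t ≤ 1 := Real.sin_le_one t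
  have hcos1 : Real.cos t ≤ 1 := Real.cos_le_one t
  have hsc : Real.sin t ^2 + Real.cos t ^2 = 1 := Real.sin_sq_add_cos_sq t
  have hftv : a * Real.sin t + b * Real.cos t - c * Real.sin t * Real.cos t = m₁ := hft
  rw [← hftv]
  rcases lt_or_ge t t1 with hB | hA1
  · -- t < t1 : use point t1
    have hm2 : m₂ ≤ (a * Real.sin t1 + b * Real.cos t1 - c) / (Real.sin t1 * Real.cos t1) :=
      h₂.2 ⟨t1, ⟨le_rfl, ht12⟩, rfl⟩
    have hblt : b < c := by
      have : (0:ℝ) < t1 := lt_of_le_of_lt ht.1 hB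
      have := Real.arccos_pos.1 this
      calc b = (b/c)*c := by field_simp
        _ < 1*c := by exact mul_lt_mul_of_pos_right this hc
        _ = c := one_mul c
    set D := Real.sqrt (c^2 - b^2) with hDdef
    have hD2 : D^2 = c^2 - b^2 := Real.sq_sqrt (by nlinarith [sq_nonneg (c-b), sq_nonneg (c+b)])
    have hD : 0 < D := Real.sqrt_pos.2 (by nlinarith)
    have hDa : D ≤ a := by
      rw [hDdef, show a = Real.sqrt (a^2) by rw [Real.sqrt_sq ha.le]]
      exact Real.sqrt_le_sqrt (by nlinarith)
    have hsint1 : Real.sin t1 = D/c := by rw [hsint1', hsqb]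
    have hgt1 : (a * Real.sin t1 + b * Real.cos t1 - c) / (Real.sin t1 * Real.cos t1)
        = c*(a-D)/b := by
      rw [hsint1, hcost1]
      rw [div_eq_div_iff (by positivity) hb.ne']
      field_simp
      linear_combination hD2
    -- key application
    have hsled : Real.sin t ≤ D/c := by
      rw [← hsint1]
      exact Real.strictMonoOn_sin.monotoneOn ⟨by linarith [pi_pos, ht.1], by linarith [ht.2]⟩
        ⟨by linarith [pi_pos, ht10], ht1p⟩ hB.le
    have hcosge : b/c ≤ Real.cos t := by
      rw [← hcost1]
      exact Real.strictAntiOn_cos.antitoneOn ⟨ht.1, by linarith [ht.2, pi_pos]⟩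
        ⟨ht10, by linarith [pi_pos]⟩ hB.le
    have hk := keyf a b c D (Real.sin t) (Real.cos t) ha hb hD hc
      (by linarith [hD2]) hac1 hsin0 hsled hcosge hcos1 hsc
    rw [hgt1] at hm2
    linarith [hk, hm2]
  · rcases le_or_gt t t2 with hA2 | hC
    · -- t ∈ [t1, t2] : use point t
      have hm2 : m₂ ≤ (a * Real.sin t + b * Real.cos t - c) / (Real.sin t * Real.cos t) :=
        h₂.2 ⟨t, ⟨hA1, hA2⟩, rfl⟩
      rcases eq_or_lt_of_le ht.1 with h0 | h0
      · -- t = 0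
        rw [← h0] at hm2 ⊢
        simp only [Real.sin_zero, Real.cos_zero, zero_mul, div_zero] at hm2
        simp only [Real.sin_zero, Real.cos_zero]
        calc m₂ ≤ 0 := hm2
          _ ≤ a * 0 + b * 1 - c * 0 * 1 := by linarith
      rcases eq_or_lt_of_le ht.2 with hp | hp
      · -- t = π/2
        rw [hp] at hm2 ⊢
        simp only [Real.sin_pi_div_two, Real.cos_pi_div_two, mul_zero, div_zero] at hm2
        simp only [Real.sin_pi_div_two, Real.cos_pi_div_two]
        calc m₂ ≤ 0 := hm2
          _ ≤ a * 1 + b * 0 - c * 1 * 0 := by linarith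
      · -- interior
        have hsp : 0 < Real.sin t := Real.sin_pos_of_pos_of_lt_pi h0 (by linarith [pi_pos])
        have hcp : 0 < Real.cos t := Real.cos_pos_of_mem_Ioo ⟨by linarith [pi_pos], hp⟩
        refine le_trans hm2 ?_
        exact ptwise a b c (Real.sin t) (Real.cos t) hac1 hbc1 hc
          hsin0 hsin1 hcos0 hcos1 (mul_pos hsp hcp)
    · -- t > t2 : use point t2
      have hm2 : m₂ ≤ (a * Real.sin t2 + b * Real.cos t2 - c) / (Real.sin t2 * Real.cos t2) :=
        h₂.2 ⟨t2, ⟨ht12, le_rfl⟩, rfl⟩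
      have halt : a < c := by
        have : t2 < π/2 := lt_of_lt_of_le hC ht.2
        have := Real.arcsin_lt_pi_div_two.1 this
        calc a = (a/c)*c := by field_simp
          _ < 1*c := mul_lt_mul_of_pos_right this hc
          _ = c := one_mul c
      set E := Real.sqrt (c^2 - a^2) with hEdef
      have hE2 : E^2 = c^2 - a^2 := Real.sq_sqrt (by nlinarith)
      have hE : 0 < E := Real.sqrt_pos.2 (by nlinarith)
      have hEb : E ≤ b := by
        rw [hEdef, show b = Real.sqrt (b^2) by rw [Real.sqrt_sq hb.le]]
        exact Real.sqrt_le_sqrt (by nlinarith)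
      have hcost2 : Real.cos t2 = E/c := by rw [hcost2', hsqa]
      have hgt2 : (a * Real.sin t2 + b * Real.cos t2 - c) / (Real.sin t2 * Real.cos t2)
          = c*(b-E)/a := by
        rw [hsint2, hcost2]
        rw [div_eq_div_iff (by positivity) ha.ne']
        field_simp
        linear_combination hE2
      have hcosle : Real.cos t ≤ E/c := by
        rw [← hcost2]
        exact Real.strictAntiOn_cos.antitoneOn ⟨ht20, by linarith [pi_pos]⟩
          ⟨ht.1, by linarith [ht.2, pi_pos]⟩ hC.le
      have hsinge : a/c ≤ Real.sin t := by
        rw [← hsint2]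
        exact Real.strictMonoOn_sin.monotoneOn ⟨by linarith [pi_pos, ht20], ht2p⟩
          ⟨by linarith [pi_pos, ht.1], ht.2⟩ hC.le
      have hk := keyf b a c E (Real.cos t) (Real.sin t) hb ha hE hc
        (by linarith [hE2]) hbc1 hcos0 hcosle hsinge hsin1 (by linarith [hsc])
      rw [hgt2] at hm2
      refine le_trans hm2 ?_
      linarith [hk]
end

section
/- Let a, b, d > 0 with d ≤ min(a,b) and define u(x) = a·x³ − b − d·(x² − 1)·√(x² + 1). Then u has a unique positive zero x₀; moreover if b < a then x₀ < (b/a)^{1/3}, if b > a then x₀ > (b/a)^{1/3}, and if a = b then x₀ = 1. -/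
/-!
Write `u(x) = (a - d) x³ + d φ(x) - b` with `φ(x) = x³ - (x² - 1) √(x² + 1)`. From
`φ(x) (x + √(x² + 1)) = 1 + x √(x² + 1)` one reads off `φ < 1 = φ(1)` on `(0, 1)` and `φ(x) ≥ x / 2`,
while `φ' = x (3x √(x² + 1) - 3x² - 1) / √(x² + 1) > 0` for `x > 1`. Since `d ≤ a`, `u` stays below
`u(1) = a - b` on `(0, 1)` and is strictly increasing on `[1, ∞)`. For `a ≤ b` the unique positive zero
therefore lies in `[1, ∞)`; the case `b < a` reduces to it through `u_{a,b}(1/x) = -u_{b,a}(x) / x³`.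
Comparing `u(x₀) = 0` with `u(1) = a - b` gives the sign of `x₀ - 1`, which is the sign of
`a x₀³ - b = d (x₀² - 1) √(x₀² + 1)`, i.e. the position of `x₀` relative to `(b / a)^(1/3)`.
-/

open Real Set

namespace CriticalEquation

noncomputable def u (a b d x : ℝ) : ℝ := a * x ^ 3 - b - d * (x ^ 2 - 1) * √(x ^ 2 + 1)

noncomputable def φ (x : ℝ) : ℝ := x ^ 3 - (x ^ 2 - 1) * √(x ^ 2 + 1)

lemma φ_mul_add_sqrt (x : ℝ) : φ x * (x + √(x ^ 2 + 1)) = 1 + x * √(x ^ 2 + 1) := by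
  have ht : √(x ^ 2 + 1) ^ 2 = x ^ 2 + 1 := sq_sqrt (by positivity)
  unfold φ
  linear_combination (1 - x ^ 2) * ht

lemma φ_lt_one {x : ℝ} (h0 : 0 < x) (h1 : x < 1) : φ x < 1 := by
  have ht : 1 < √(x ^ 2 + 1) := by
    rw [lt_sqrt zero_le_one]; nlinarith
  have hφ := φ_mul_add_sqrt x
  nlinarith

lemma half_le_φ {x : ℝ} (hx : 0 ≤ x) : x / 2 ≤ φ x := by
  have ht : x < √(x ^ 2 + 1) := by
    rw [lt_sqrt hx]; linarith
  have hφ := φ_mul_add_sqrt x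
  nlinarith

lemma hasDerivAt_φ (x : ℝ) :
    HasDerivAt φ (x * (3 * x * √(x ^ 2 + 1) - (3 * x ^ 2 + 1)) / √(x ^ 2 + 1)) x := by
  have ht : √(x ^ 2 + 1) ^ 2 = x ^ 2 + 1 := sq_sqrt (by positivity)
  have hsqrt := ((hasDerivAt_pow 2 x).add_const 1).sqrt (by positivity)
  have h := (hasDerivAt_pow 3 x).sub (((hasDerivAt_pow 2 x).sub_const 1).mul hsqrt)
  unfold φ
  exact h.congr_deriv (by field_simp; linear_combination -4 * x * ht)

lemma φ_strictMonoOn : StrictMonoOn φ (Ici 1) := by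
  refine strictMonoOn_of_deriv_pos (convex_Ici 1)
    (fun x _ => (hasDerivAt_φ x).continuousAt.continuousWithinAt) fun x hx => ?_
  rw [interior_Ici, mem_Ioi] at hx
  rw [(hasDerivAt_φ x).deriv]
  have ht : √(x ^ 2 + 1) ^ 2 = x ^ 2 + 1 := sq_sqrt (by positivity)
  have key : 3 * x ^ 2 + 1 < 3 * x * √(x ^ 2 + 1) := by
    refine lt_of_pow_lt_pow_left₀ 2 (by positivity) ?_
    rw [mul_pow, ht]
    nlinarith
  have : 0 < 3 * x * √(x ^ 2 + 1) - (3 * x ^ 2 + 1) := by linarith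
  positivity

lemma u_eq (a b d x : ℝ) : u a b d x = (a - d) * x ^ 3 + d * φ x - b := by
  unfold u φ; ring

lemma u_one (a b d : ℝ) : u a b d 1 = a - b := by norm_num [u]

lemma continuous_u (a b d : ℝ) : Continuous (u a b d) := by
  unfold u; fun_prop

lemma u_inv (a b d : ℝ) {x : ℝ} (hx : 0 < x) : u a b d x⁻¹ = -u b a d x / x ^ 3 := by
  have hs : √(x⁻¹ ^ 2 + 1) = √(x ^ 2 + 1) / x := by
    rw [show x⁻¹ ^ 2 + 1 = (x ^ 2 + 1) / x ^ 2 by field_simp; ring,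
      sqrt_div (by positivity), sqrt_sq hx.le]
  unfold u
  rw [hs]
  field_simp
  ring

lemma u_inv_eq_zero_iff (a b d : ℝ) {x : ℝ} (hx : 0 < x) : u a b d x⁻¹ = 0 ↔ u b a d x = 0 := by
  rw [u_inv a b d hx]
  simp [hx.ne']

variable {a b d : ℝ}

section

variable (hd : 0 < d) (hda : d ≤ a)
include hd hda

lemma u_strictMonoOn : StrictMonoOn (u a b d) (Ici 1) := by
  intro x hx y hy hxy
  have hcube : (a - d) * x ^ 3 ≤ (a - d) * y ^ 3 :=
    mul_le_mul_of_nonneg_left (pow_le_pow_left₀ (zero_le_one.trans hx) hxy.le 3) (sub_nonneg.2 hda)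
  have hφ := mul_lt_mul_of_pos_left (φ_strictMonoOn hx hy hxy) hd
  simp only [u_eq]
  linarith

lemma u_lt_u_one {x : ℝ} (h0 : 0 < x) (h1 : x < 1) : u a b d x < u a b d 1 := by
  have hcube : (a - d) * x ^ 3 ≤ (a - d) * 1 ^ 3 :=
    mul_le_mul_of_nonneg_left (pow_le_pow_left₀ h0.le h1.le 3) (sub_nonneg.2 hda)
  have hφ := mul_lt_mul_of_pos_left (φ_lt_one h0 h1) hd
  have hφ1 : φ 1 = 1 := by norm_num [φ]
  simp only [u_eq, hφ1]
  linarith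

lemma one_le_of_u_eq_zero (hab : a ≤ b) {x : ℝ} (hx : 0 < x) (hu : u a b d x = 0) : 1 ≤ x := by
  by_contra! h
  have := u_lt_u_one (b := b) hd hda hx h
  rw [hu, u_one] at this
  linarith

lemma exists_one_le_u_eq_zero (hab : a ≤ b) : ∃ x, 1 ≤ x ∧ u a b d x = 0 := by
  have ha : 0 < a := hd.trans_le hda
  have hb : 0 < b := ha.trans_le hab
  set X := 2 * b / a + 1 with hX
  have hX1 : 1 ≤ X := by
    have : 0 ≤ 2 * b / a := by positivity
    linarith
  have haX : a * X = 2 * b + a := by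
    rw [hX]; field_simp
  have huX : 0 < u a b d X := by
    have hcube : (a - d) * X ≤ (a - d) * X ^ 3 :=
      mul_le_mul_of_nonneg_left (le_self_pow₀ hX1 (by norm_num)) (sub_nonneg.2 hda)
    have hφ := mul_le_mul_of_nonneg_left (half_le_φ (zero_le_one.trans hX1)) hd.le
    rw [u_eq]
    nlinarith
  obtain ⟨x, hx, hux⟩ := intermediate_value_Icc hX1 (continuous_u a b d).continuousOn
    ⟨by rw [u_one]; linarith, huX.le⟩
  exact ⟨x, hx.1, hux⟩

lemma existsUnique_u_eq_zero_of_le (hab : a ≤ b) : ∃! x, 0 < x ∧ u a b d x = 0 := by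
  obtain ⟨x, hx1, hx⟩ := exists_one_le_u_eq_zero hd hda hab
  refine ⟨x, ⟨zero_lt_one.trans_le hx1, hx⟩, fun y ⟨hy0, hy⟩ => ?_⟩
  exact (u_strictMonoOn hd hda).injOn (one_le_of_u_eq_zero hd hda hab hy0 hy) hx1 (hy.trans hx.symm)

variable {x : ℝ} (hu : u a b d x = 0)
include hu

lemma lt_one_of_u_eq_zero (hba : b < a) : x < 1 := by
  by_contra! h
  have := (u_strictMonoOn (b := b) hd hda).monotoneOn self_mem_Ici h h
  rw [hu, u_one] at this
  linarith

lemma one_lt_of_u_eq_zero (hx : 0 < x) (hab : a < b) : 1 < x := by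
  refine (one_le_of_u_eq_zero hd hda hab.le hx hu).lt_of_ne ?_
  rintro rfl
  rw [u_one] at hu
  linarith

lemma eq_one_of_u_eq_zero (hx : 0 < x) (hab : a = b) : x = 1 :=
  (u_strictMonoOn hd hda).injOn (one_le_of_u_eq_zero hd hda hab.le hx hu) self_mem_Ici
    (by rw [hu, u_one, hab, sub_self])

end

lemma existsUnique_u_eq_zero (hd : 0 < d) (hda : d ≤ a) (hdb : d ≤ b) :
    ∃! x, 0 < x ∧ u a b d x = 0 := by
  rcases le_or_gt a b with hab | hba
  · exact existsUnique_u_eq_zero_of_le hd hda hab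
  obtain ⟨y, ⟨hy0, hy⟩, huniq⟩ := existsUnique_u_eq_zero_of_le hd hdb hba.le
  refine ⟨y⁻¹, ⟨inv_pos.2 hy0, (u_inv_eq_zero_iff a b d hy0).2 hy⟩, fun x ⟨hx0, hx⟩ => ?_⟩
  have hx' : u b a d x⁻¹ = 0 := by rwa [u_inv_eq_zero_iff b a d hx0]
  rw [← huniq x⁻¹ ⟨inv_pos.2 hx0, hx'⟩, inv_inv]

lemma lt_rpow_one_third_of_u_eq_zero (ha : 0 < a) (hb : 0 < b) (hd : 0 < d) {x : ℝ} (hx : 0 < x)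
    (hx1 : x < 1) (hu : u a b d x = 0) : x < (b / a) ^ ((1 : ℝ) / 3) := by
  rw [one_div, lt_rpow_inv_iff_of_pos hx.le (by positivity) three_pos, lt_div_iff₀ ha]
  have hs : d * ((x ^ 2 - 1) * √(x ^ 2 + 1)) < 0 :=
    mul_neg_of_pos_of_neg hd (mul_neg_of_neg_of_pos (by nlinarith) (by positivity))
  unfold u at hu
  rw [rpow_ofNat]
  linarith

lemma rpow_one_third_lt_of_u_eq_zero (ha : 0 < a) (hb : 0 < b) (hd : 0 < d) {x : ℝ} (hx : 0 < x)
    (hx1 : 1 < x) (hu : u a b d x = 0) : (b / a) ^ ((1 : ℝ) / 3) < x := by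
  rw [one_div, rpow_inv_lt_iff_of_pos (by positivity) hx.le three_pos, div_lt_iff₀ ha]
  have hs : 0 < d * ((x ^ 2 - 1) * √(x ^ 2 + 1)) := by
    have : 0 < x ^ 2 - 1 := by nlinarith
    positivity
  unfold u at hu
  rw [rpow_ofNat]
  linarith

end CriticalEquation

open CriticalEquation in
theorem stmt17 (a b d : ℝ) (ha : 0 < a) (hb : 0 < b) (hd0 : 0 < d) (hd : d ≤ min a b) :
    (∃! x : ℝ, 0 < x ∧
        a * x ^ 3 - b - d * (x ^ 2 - 1) * Real.sqrt (x ^ 2 + 1) = 0) ∧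
    ∀ x₀ : ℝ, 0 < x₀ →
      a * x₀ ^ 3 - b - d * (x₀ ^ 2 - 1) * Real.sqrt (x₀ ^ 2 + 1) = 0 →
        (b < a → x₀ < (b / a) ^ ((1 : ℝ) / 3)) ∧
        (a < b → (b / a) ^ ((1 : ℝ) / 3) < x₀) ∧
        (a = b → x₀ = 1) := by
  have hda : d ≤ a := hd.trans (min_le_left a b)
  have hdb : d ≤ b := hd.trans (min_le_right a b)
  refine ⟨existsUnique_u_eq_zero hd0 hda hdb, fun x hx hu => ⟨fun hba => ?_, fun hab => ?_,
    fun hab => eq_one_of_u_eq_zero hd0 hda hu hx hab⟩⟩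
  · exact lt_rpow_one_third_of_u_eq_zero ha hb hd0 hx (lt_one_of_u_eq_zero hd0 hda hu hba) hu
  · exact rpow_one_third_lt_of_u_eq_zero ha hb hd0 hx (one_lt_of_u_eq_zero hd0 hda hu hx hab) hu
end
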